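/- Let f : ℕ → V be a function into a finite-dimensional complex vector space and suppose the family R(λ) = ∑_{μ=1}^∞ μ·f(λμ) converges absolutely for every λ ≥ 1 (in the sense that ∑_{μ} μ‖f(λμ)‖ < ∞ and moreover ∑_{λ,μ} λμ‖f(λμ)‖ < ∞). Then Möbius inversion holds: f(1) = ∑_{λ=1}^∞ λ·μ(λ)·R(λ), where μ is the Möbius function. -/

import Mathlib

/-!
Put `F(l, m) = l μ(l) m • f(lm)`. By the hypothesis on the double sum, `F` is absolutely summable
on `ℕ × ℕ`, so its sum may be computed in two ways. Summing first over `m` gives the right-hand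
side. Grouping instead the terms with `lm = n` gives `n (∑_{l ∣ n} μ(l)) • f(n)`, which vanishes
unless `n = 1`, so the total is `f(1)`.
-/

open ArithmeticFunction
open scoped ArithmeticFunction.Moebius

theorem HasSum.sum_divisorsAntidiagonal {E : Type*} [AddCommGroup E] [UniformSpace E]
    [IsUniformAddGroup E] [CompleteSpace E] [T2Space E] {g : ℕ × ℕ → E} {a : E}
    (hg : HasSum g a) (hg0 : ∀ p : ℕ × ℕ, p.1 * p.2 = 0 → g p = 0) :
    HasSum (fun n : ℕ ↦ ∑ p ∈ n.divisorsAntidiagonal, g p) a := by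
  convert hg.tsum_fiberwise (fun p ↦ p.1 * p.2) with n
  rcases eq_or_ne n 0 with rfl | hn
  · simp [tsum_congr fun p : (fun p : ℕ × ℕ ↦ p.1 * p.2) ⁻¹' {0} ↦ hg0 p p.2]
  · rw [show (fun p : ℕ × ℕ ↦ p.1 * p.2) ⁻¹' {n} = n.divisorsAntidiagonal by ext; simp [hn],
      Finset.tsum_subtype']

theorem sum_divisorsAntidiagonal_moebius {R : Type*} [Ring R] (n : ℕ) :
    ∑ p ∈ n.divisorsAntidiagonal, (μ p.1 : R) = if n = 1 then 1 else 0 := by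
  rw [← one_apply, ← coe_moebius_mul_coe_zeta, mul_apply]
  refine Finset.sum_congr rfl fun p hp ↦ ?_
  simp [(Nat.ne_zero_of_mem_divisorsAntidiagonal hp).2]

theorem sum_divisorsAntidiagonal_moebius_smul {R M : Type*} [Ring R] [AddCommGroup M] [Module R M]
    (f : ℕ → M) (n : ℕ) :
    ∑ p ∈ n.divisorsAntidiagonal, ((p.1 : R) * μ p.1 * p.2) • f (p.1 * p.2) =
      if n = 1 then f 1 else 0 := by
  have hterm : ∀ p ∈ n.divisorsAntidiagonal,
      ((p.1 : R) * μ p.1 * p.2) • f (p.1 * p.2) = ((n : R) * μ p.1) • f n := by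
    intro p hp
    rw [← (Nat.mem_divisorsAntidiagonal.mp hp).1, Nat.cast_mul, mul_assoc, mul_assoc,
      (Int.cast_commute _ _).eq]
  rw [Finset.sum_congr rfl hterm, ← Finset.sum_smul, ← Finset.mul_sum,
    sum_divisorsAntidiagonal_moebius]
  split_ifs with h <;> simp [h]

theorem stmt15_general {V : Type*} [NormedAddCommGroup V] [NormedSpace ℂ V]
    [FiniteDimensional ℂ V] (f : ℕ → V)
    (h2 : Summable (fun p : ℕ × ℕ => (p.1 : ℝ) * (p.2 : ℝ) * ‖f (p.1 * p.2)‖)) :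
    f 1 = ∑' l : ℕ, ((l : ℂ) * ((ArithmeticFunction.moebius l : ℤ) : ℂ)) •
      (∑' m : ℕ, (m : ℂ) • f (l * m)) := by
  set F : ℕ × ℕ → V := fun p ↦ ((p.1 : ℂ) * μ p.1 * p.2) • f (p.1 * p.2)
  have hF : Summable F := by
    refine h2.of_norm_bounded fun p ↦ ?_
    have hμ : ‖(μ p.1 : ℂ)‖ ≤ 1 := by
      rw [Complex.norm_intCast]
      exact_mod_cast abs_moebius_le_one
    simp only [F, norm_smul, norm_mul, Complex.norm_natCast]
    gcongr
    exact mul_le_of_le_one_right (Nat.cast_nonneg _) hμ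
  have hF0 : ∀ p : ℕ × ℕ, p.1 * p.2 = 0 → F p = 0 := by
    intro p hp
    rcases Nat.mul_eq_zero.mp hp with h | h <;> simp [F, h]
  calc f 1 = ∑' p, F p := by
        refine (hasSum_ite_eq 1 (f 1)).unique ?_
        simpa only [F, sum_divisorsAntidiagonal_moebius_smul] using
          hF.hasSum.sum_divisorsAntidiagonal hF0
    _ = ∑' l, ∑' m, F (l, m) := hF.tsum_prod
    _ = _ := tsum_congr fun l ↦ by simp only [F, ← smul_smul, tsum_const_smul'']

/-- Möbius inversion for absolutely convergent series: if `f : ℕ → V` takes values in a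
finite-dimensional normed complex vector space, `R(λ) = ∑_{μ≥1} μ·f(λμ)` converges
absolutely for each `λ ≥ 1`, and the double sum `∑_{λ,μ≥1} λμ‖f(λμ)‖` is finite, then
`f(1) = ∑_{λ≥1} λ·μ(λ)·R(λ)` where `μ` is the Möbius function. (Terms with index `0`
carry coefficient `0`, so summing over `ℕ` agrees with summing over positive indices.) -/
theorem stmt15 {V : Type*} [NormedAddCommGroup V] [NormedSpace ℂ V]
    [FiniteDimensional ℂ V] (f : ℕ → V)
    (h1 : ∀ l : ℕ, 1 ≤ l → Summable (fun m : ℕ => (m : ℝ) * ‖f (l * m)‖))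
    (h2 : Summable (fun p : ℕ × ℕ => (p.1 : ℝ) * (p.2 : ℝ) * ‖f (p.1 * p.2)‖)) :
    f 1 = ∑' l : ℕ, ((l : ℂ) * ((ArithmeticFunction.moebius l : ℤ) : ℂ)) •
      (∑' m : ℕ, (m : ℂ) • f (l * m)) :=
  stmt15_general f h2
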